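/- Let ℓ ≥ 5 and Q ≥ 5 be distinct primes, ε ∈ {±1}, c = −ε(12/Q)Q^{−1} mod ℓ, and let a(n) (n ≥ 1) be integers with a(Qn) ≡ c·a(n/Q) (mod ℓ) for all n (where a(n/Q) = 0 if Q ∤ n). If t is squarefree, Q ∤ t, and m is a positive integer with Q | m and a(t m²) ≢ 0 (mod ℓ), then a(t m²/Q²) ≢ 0 (mod ℓ). Consequently there exists m' with Q ∤ m' and a(t m'²) ≢ 0 (mod ℓ). -/
import Mathlib


/-- Removing factors of Q²: with c ≡ −ε(12/Q)Q^{−1} (mod ℓ) and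
a(Qn) ≡ c·a(n/Q) (mod ℓ) for all n (where a(n/Q) = 0 if Q ∤ n), if t is squarefree
with Q ∤ t and Q ∣ m with a(tm²) ≢ 0 (mod ℓ), then a(tm²/Q²) ≢ 0 (mod ℓ);
consequently if a(tm²) ≢ 0 (mod ℓ) for some m ≥ 1, there is m' with Q ∤ m' and
a(tm'²) ≢ 0 (mod ℓ). -/
theorem remove_Q_squares (ℓ Q : ℕ) (hℓ : ℓ.Prime) (hQ : Q.Prime)
    (h5ℓ : 5 ≤ ℓ) (h5Q : 5 ≤ Q) (hne : ℓ ≠ Q) (ε c : ℤ) (hε : ε = 1 ∨ ε = -1)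
    (hc : (c : ZMod ℓ) = ((-ε * jacobiSym 12 Q : ℤ) : ZMod ℓ) * (Q : ZMod ℓ)⁻¹)
    (a : ℕ → ℤ)
    (h : ∀ n : ℕ, a (Q * n) ≡ c * (if Q ∣ n then a (n / Q) else 0) [ZMOD (ℓ : ℤ)])
    (t : ℕ) (ht : Squarefree t) (htQ : ¬ Q ∣ t) :
    (∀ m : ℕ, 0 < m → Q ∣ m → ¬ a (t * m ^ 2) ≡ 0 [ZMOD (ℓ : ℤ)] →
      ¬ a (t * m ^ 2 / Q ^ 2) ≡ 0 [ZMOD (ℓ : ℤ)]) ∧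
    ((∃ m : ℕ, 0 < m ∧ ¬ a (t * m ^ 2) ≡ 0 [ZMOD (ℓ : ℤ)]) →
      ∃ m' : ℕ, 0 < m' ∧ ¬ Q ∣ m' ∧ ¬ a (t * m' ^ 2) ≡ 0 [ZMOD (ℓ : ℤ)]) := by
  have hQ0 : 0 < Q := hQ.pos
  have key : ∀ m : ℕ, Q ∣ m → ¬ a (t * m ^ 2) ≡ 0 [ZMOD (ℓ : ℤ)] →
      (t * m ^ 2 / Q ^ 2 = t * (m / Q) ^ 2) ∧
      ¬ a (t * (m / Q) ^ 2) ≡ 0 [ZMOD (ℓ : ℤ)] := by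
    intro m hQm hna
    obtain ⟨k, rfl⟩ := hQm
    have hdiv : t * (Q * k) ^ 2 / Q ^ 2 = t * k ^ 2 := by
      rw [mul_pow]
      rw [Nat.mul_div_assoc t (Dvd.intro (k^2) rfl)]
      congr 1
      exact Nat.mul_div_cancel_left _ (pow_pos hQ0 2)
    have hmq : Q * k / Q = k := Nat.mul_div_cancel_left _ hQ0
    refine ⟨by rw [hdiv, hmq], ?_⟩
    rw [hmq]
    intro h0
    apply hna
    have heq : t * (Q * k) ^ 2 = Q * (Q * (t * k ^ 2)) := by ring
    rw [heq]
    have := h (Q * (t * k ^ 2))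
    rw [if_pos (Dvd.intro _ rfl), Nat.mul_div_cancel_left _ hQ0] at this
    calc a (Q * (Q * (t * k ^ 2))) ≡ c * a (t * k ^ 2) [ZMOD (ℓ:ℤ)] := this
      _ ≡ c * 0 [ZMOD (ℓ:ℤ)] := (Int.ModEq.mul_left c h0)
      _ = 0 := mul_zero c
  constructor
  · intro m _ hQm hna
    obtain ⟨heq, hn⟩ := key m hQm hna
    rw [heq]; exact hn
  · rintro ⟨m, hm, hna⟩
    induction m using Nat.strong_induction_on with
    | _ m ih =>
      by_cases hQm : Q ∣ m
      · obtain ⟨_, hn⟩ := key m hQm hna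
        have hmQpos : 0 < m / Q := Nat.div_pos (Nat.le_of_dvd hm hQm) hQ0
        exact ih (m / Q) (Nat.div_lt_self hm hQ.one_lt) hmQpos hn
      · exact ⟨m, hm, hQm, hna⟩
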